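/- In the single-period Private Patient Problem with only double rooms, if both βf = 1 and βm = 1 (i.e., F − F* and M − M* are both odd with F* ≥ 1 and M* ≥ 1) and the number of private patients equals α + 1 where α = |R| − ⌈(F−F*)/2⌉ − ⌈(M−M*)/2⌉, then s^max = F* + M* − 1: exactly one private patient must share a room, and F* + M* − 1 private patients alone in rooms is achievable. -/

import Mathlib

/-!
Writing `F - F* = 2k + 1` and `M - M* = 2l + 1`, the hypothesis on `α` says
`|R| = (k + 1) + (l + 1) + F* + M* - 1`. An assignment is determined, up to the choice of
rooms, by the four room counts, so achievability is a purely arithmetic condition. Giving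
every private patient a room would require `k + 1` shared female rooms and `l + 1` shared male
rooms besides the `F* + M*` private ones, one room too many; dropping one private male room
and letting that patient share fits exactly.
-/

/-- An achievable value of the Private Patient Problem with only double rooms. -/
def PPPAchievable {ι : Type*} (R : Finset ι) (F Fs M Ms s : ℕ) : Prop :=
  ∃ SF SFs SM SMs : Finset ι,
    SF ⊆ R ∧ SFs ⊆ R ∧ SM ⊆ R ∧ SMs ⊆ R ∧
    Disjoint SF SFs ∧ Disjoint SF SM ∧ Disjoint SF SMs ∧
    Disjoint SFs SM ∧ Disjoint SFs SMs ∧ Disjoint SM SMs ∧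
    F ≤ 2 * SF.card + SFs.card ∧ SFs.card ≤ Fs ∧
    M ≤ 2 * SM.card + SMs.card ∧ SMs.card ≤ Ms ∧
    s = SFs.card + SMs.card

open Finset

theorem Finset.exists_disjoint_subsets_card_eq {ι : Type*} (T : Finset ι) {a b : ℕ}
    (h : a + b ≤ #T) :
    ∃ A B : Finset ι, A ⊆ T ∧ B ⊆ T ∧ Disjoint A B ∧ #A = a ∧ #B = b := by
  classical
  obtain ⟨A, hAT, hA⟩ := T.exists_subset_card_eq (show a ≤ #T by omega)
  obtain ⟨B, hBT, hB⟩ := (T \ A).exists_subset_card_eq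
    (show b ≤ #(T \ A) by rw [card_sdiff_of_subset hAT]; omega)
  exact ⟨A, B, hAT, hBT.trans sdiff_subset, disjoint_sdiff.mono_right hBT, hA, hB⟩

theorem pppAchievable_iff {ι : Type*} (R : Finset ι) (F Fs M Ms s : ℕ) :
    PPPAchievable R F Fs M Ms s ↔
      ∃ nF aF nM aM : ℕ, nF + aF + (nM + aM) ≤ #R ∧
        F ≤ 2 * nF + aF ∧ aF ≤ Fs ∧ M ≤ 2 * nM + aM ∧ aM ≤ Ms ∧ s = aF + aM := by
  classical
  constructor
  · rintro ⟨SF, SFs, SM, SMs, hSF, hSFs, hSM, hSMs, hF_Fs, hF_M, hF_Ms, hFs_M, hFs_Ms, hM_Ms,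
      hF, hFs, hM, hMs, rfl⟩
    refine ⟨#SF, #SFs, #SM, #SMs, ?_, hF, hFs, hM, hMs, rfl⟩
    have hdisj : Disjoint (SF ∪ SFs) (SM ∪ SMs) := by
      simp only [disjoint_union_left, disjoint_union_right]
      exact ⟨⟨hF_M, hFs_M⟩, hF_Ms, hFs_Ms⟩
    calc #SF + #SFs + (#SM + #SMs) = #((SF ∪ SFs) ∪ (SM ∪ SMs)) := by
          rw [card_union_of_disjoint hdisj, card_union_of_disjoint hF_Fs,
            card_union_of_disjoint hM_Ms]
      _ ≤ #R := card_le_card (union_subset (union_subset hSF hSFs) (union_subset hSM hSMs))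
  · rintro ⟨nF, aF, nM, aM, hR, hF, hFs, hM, hMs, rfl⟩
    obtain ⟨P, Q, hP, hQ, hPQ, hPc, hQc⟩ := R.exists_disjoint_subsets_card_eq hR
    obtain ⟨SF, SFs, hSF, hSFs, hF_Fs, rfl, rfl⟩ := P.exists_disjoint_subsets_card_eq hPc.ge
    obtain ⟨SM, SMs, hSM, hSMs, hM_Ms, rfl, rfl⟩ := Q.exists_disjoint_subsets_card_eq hQc.ge
    exact ⟨SF, SFs, SM, SMs, hSF.trans hP, hSFs.trans hP, hSM.trans hQ, hSMs.trans hQ, hF_Fs,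
      hPQ.mono hSF hSM, hPQ.mono hSF hSMs, hPQ.mono hSFs hSM, hPQ.mono hSFs hSMs, hM_Ms,
      hF, hFs, hM, hMs, rfl⟩

theorem ppp_one_private_shares_general {ι : Type*} (R : Finset ι) (F Fs M Ms : ℕ)
    (hβf : Odd (F - Fs)) (hβm : Odd (M - Ms)) (hFs : 1 ≤ Fs) (hMs : 1 ≤ Ms)
    (hα : Fs + Ms = (R.card - (F - Fs + 1) / 2 - (M - Ms + 1) / 2) + 1) :
    IsGreatest {s | PPPAchievable R F Fs M Ms s} (Fs + Ms - 1) := by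
  obtain ⟨k, hk⟩ := hβf
  obtain ⟨l, hl⟩ := hβm
  have hR : #R = (k + 1) + (l + 1) + Fs + Ms - 1 := by omega
  constructor
  · rw [Set.mem_ofPred_eq, pppAchievable_iff]
    exact ⟨k + 1, Fs, l + 1, Ms - 1, by omega, by omega, le_rfl, by omega, Nat.sub_le _ _,
      by omega⟩
  · intro s hs
    obtain ⟨nF, aF, nM, aM, hroom, hF, hFs', hM, hMs', rfl⟩ := (pppAchievable_iff ..).1 hs
    omega

theorem ppp_one_private_shares {ι : Type*} (R : Finset ι) (F Fs M Ms : ℕ)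
    (hF : Fs ≤ F) (hM : Ms ≤ M)
    (hfeas : (F + 1) / 2 + (M + 1) / 2 ≤ R.card)
    (hβf : Odd (F - Fs)) (hβm : Odd (M - Ms)) (hFs : 1 ≤ Fs) (hMs : 1 ≤ Ms)
    (hα : Fs + Ms = (R.card - (F - Fs + 1) / 2 - (M - Ms + 1) / 2) + 1) :
    IsGreatest {s | PPPAchievable R F Fs M Ms s} (Fs + Ms - 1) :=
  ppp_one_private_shares_general R F Fs M Ms hβf hβm hFs hMs hα
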